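/- arXiv:2206.08782 — 6 statements merged into one kernel-verified Lean document; each statement's English description precedes it below -/
import Mathlib

section
/- For every λ ∈ ℂ such that P(λ) is invertible and λ·I_{pN} − 𝒜_p is invertible (all real matrices regarded as complex), the matrix (λ·I_{pN} − 𝒜_p)^{−1} E_p equals the block column whose i-th N×N block is λ^{i−1} P(λ)^{−1} for i = 1,…,p, and consequently 𝒞_q (λ·I_{pN} − 𝒜_p)^{−1} E_p = Q(λ) P(λ)^{−1}. -/
/-
Put `V(λ) := (I, λ I, …, λ^{p-1} I)ᵀ`. Every block row of `λ I − 𝒜_p` except the last annihilates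
`V(λ) X`, since it reads `λ · λ^{i} X − λ^{i+1} X`, while the last one reads
`λ^p X − ∑ A_{p-k} λ^k X = P(λ) X`. Hence `(λ I − 𝒜_p) V(λ) P(λ)^{-1} = E_p`, i.e.
`(λ I − 𝒜_p)^{-1} E_p = V(λ) P(λ)^{-1}`; multiplying by the block row `𝒞_q` collects
`∑ λ^k C_k = Q(λ)` in front of `P(λ)^{-1}`.
-/

open Matrix

noncomputable section

/-- The companion block matrix `𝒜_p ∈ M_{pN}(ℝ)` of the family `A 0 = A_1, …, A (p-1) = A_p`:
identity `N×N` blocks in positions `(i, i+1)` for `i = 1,…,p−1`, last block row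
`[A_p, A_{p−1}, …, A_1]`, and zero blocks elsewhere. -/
def companionM {N p : ℕ} (A : Fin p → Matrix (Fin N) (Fin N) ℝ) :
    Matrix (Fin p × Fin N) (Fin p × Fin N) ℝ :=
  Matrix.of fun x y =>
    if (x.1 : ℕ) + 1 = p then A y.1.rev x.2 y.2
    else if (y.1 : ℕ) = (x.1 : ℕ) + 1 then (if x.2 = y.2 then (1 : ℝ) else 0) else 0

/-- The matrix polynomial `P(λ) := λ^p I_N − A_1 λ^{p−1} − ⋯ − A_p` over `ℂ`
(here `A i = A_{i+1}`). -/
def Ppoly {N p : ℕ} (A : Fin p → Matrix (Fin N) (Fin N) ℝ) (z : ℂ) :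
    Matrix (Fin N) (Fin N) ℂ :=
  z ^ p • 1 - ∑ i : Fin p, z ^ (p - 1 - (i : ℕ)) • (A i).map (algebraMap ℝ ℂ)

/-- The matrix polynomial `Q(λ) := C_0 + C_1 λ + ⋯ + C_q λ^q` over `ℂ`
(here `C j = C_j` for `j = 0,…,q`). -/
def Qpoly {N p : ℕ} (q : ℕ) (hq : q < p) (C : Fin p → Matrix (Fin N) (Fin N) ℝ) (z : ℂ) :
    Matrix (Fin N) (Fin N) ℂ :=
  ∑ j : Fin (q + 1), z ^ (j : ℕ) • (C (Fin.castLE hq j)).map (algebraMap ℝ ℂ)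

/-- The block column `E_p = (0,…,0,I_N)ᵀ ∈ M_{pN,N}`, over `ℂ`. -/
def EpC {N p : ℕ} : Matrix (Fin p × Fin N) (Fin N) ℂ :=
  Matrix.of fun x j => if (x.1 : ℕ) + 1 = p then (if x.2 = j then (1 : ℂ) else 0) else 0

/-- The block row `𝒞_q = [C_0, C_1, …, C_{p−1}] ∈ M_{N,pN}`, over `ℂ`. -/
def CqC {N p : ℕ} (C : Fin p → Matrix (Fin N) (Fin N) ℝ) : Matrix (Fin N) (Fin p × Fin N) ℂ :=
  Matrix.of fun i y => ((C y.1).map (algebraMap ℝ ℂ)) i y.2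


namespace Matrix

variable {ι m n o α : Type*}

def blockCol (B : ι → Matrix m n α) : Matrix (ι × m) n α :=
  of fun x j => B x.1 x.2 j

def blockRow (R : ι → Matrix m n α) : Matrix m (ι × n) α :=
  of fun i y => R y.1 i y.2

theorem blockCol_sub [Sub α] (B B' : ι → Matrix m n α) :
    blockCol (B - B') = blockCol B - blockCol B' :=
  rfl

theorem smul_blockCol {R : Type*} [SMul R α] (r : R) (B : ι → Matrix m n α) :
    r • blockCol B = blockCol (r • B) :=
  rfl

theorem blockCol_mul [Fintype n] [NonUnitalNonAssocSemiring α] (B : ι → Matrix m n α)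
    (Y : Matrix n o α) : blockCol B * Y = blockCol fun k => B k * Y :=
  rfl

theorem blockRow_mul_blockCol [Fintype ι] [Fintype n] [NonUnitalNonAssocSemiring α]
    (R : ι → Matrix m n α) (B : ι → Matrix n o α) :
    blockRow R * blockCol B = ∑ k, R k * B k := by
  ext i j
  simp only [mul_apply, Fintype.sum_prod_type, blockRow, blockCol, of_apply, sum_apply]

end Matrix

section Companion

variable {N p : ℕ} (A : Fin p → Matrix (Fin N) (Fin N) ℝ)

theorem companionM_map_mul_blockCol {K n : Type*} [Semiring K] [Algebra ℝ K]
    (B : Fin p → Matrix (Fin N) n K) :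
    (companionM A).map (algebraMap ℝ K) * blockCol B = blockCol fun a : Fin p =>
      if h : (a : ℕ) + 1 < p then B ⟨a + 1, h⟩
      else ∑ b, (A b.rev).map (algebraMap ℝ K) * B b := by
  ext ⟨a, i⟩ j
  simp only [mul_apply, Fintype.sum_prod_type, companionM, blockCol, map_apply, of_apply]
  split_ifs with hlast hlt hlt
  · omega
  · simp [Matrix.sum_apply, mul_apply]
  · simp only [← Fin.ext_iff (b := ⟨a + 1, hlt⟩)]
    simp [apply_ite (algebraMap ℝ K), ite_mul]
  · omega

theorem EpC_eq_blockCol :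
    (EpC : Matrix (Fin p × Fin N) (Fin N) ℂ) =
      blockCol fun a : Fin p => if (a : ℕ) + 1 = p then 1 else 0 := by
  ext ⟨a, i⟩ j
  simp only [EpC, blockCol, of_apply]
  split_ifs <;> simp [one_apply, *]

theorem Ppoly_eq_sum_rev (z : ℂ) :
    Ppoly A z = z ^ p • 1 - ∑ b : Fin p, z ^ (b : ℕ) • (A b.rev).map (algebraMap ℝ ℂ) := by
  rw [Ppoly]
  congr 1
  refine Fintype.sum_equiv Fin.revPerm _ _ fun b => ?_
  simp only [Fin.revPerm_apply, Fin.rev_rev, Fin.val_rev]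
  congr 2
  omega

theorem sub_companionM_mul_blockCol_pow (z : ℂ) (X : Matrix (Fin N) (Fin N) ℂ) :
    (z • (1 : Matrix (Fin p × Fin N) (Fin p × Fin N) ℂ) - (companionM A).map (algebraMap ℝ ℂ)) *
        blockCol (fun k : Fin p => z ^ (k : ℕ) • X) =
      (EpC : Matrix (Fin p × Fin N) (Fin N) ℂ) * (Ppoly A z * X) := by
  rw [Matrix.sub_mul, Matrix.smul_mul, Matrix.one_mul, companionM_map_mul_blockCol, smul_blockCol,
    ← blockCol_sub, EpC_eq_blockCol, blockCol_mul]
  congr 1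
  funext a
  simp only [Pi.sub_apply, Pi.smul_apply]
  split_ifs with hlt heq heq
  · omega
  · rw [smul_smul, ← pow_succ', sub_self, Matrix.zero_mul]
  · rw [Ppoly_eq_sum_rev, smul_smul, ← pow_succ', heq, Matrix.one_mul, Matrix.sub_mul,
      Matrix.smul_mul, Matrix.one_mul, Matrix.sum_mul]
    simp only [Matrix.mul_smul, Matrix.smul_mul]
  · omega

end Companion

theorem Qpoly_eq_sum {N p q : ℕ} (hq : q < p) (C : Fin p → Matrix (Fin N) (Fin N) ℝ)
    (hC : ∀ j : Fin p, q < (j : ℕ) → C j = 0) (z : ℂ) :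
    Qpoly q hq C z = ∑ k : Fin p, z ^ (k : ℕ) • (C k).map (algebraMap ℝ ℂ) := by
  refine Fintype.sum_of_injective (Fin.castLE hq) (Fin.castLE_injective hq) _ _ (fun k hk => ?_)
    fun j => rfl
  have hqk : q < (k : ℕ) := by
    by_contra! hkq
    exact hk ⟨⟨k, Nat.lt_succ_of_le hkq⟩, rfl⟩
  simp [hC k hqk]

theorem CqC_eq_blockRow {N p : ℕ} (C : Fin p → Matrix (Fin N) (Fin N) ℝ) :
    CqC C = blockRow fun k => (C k).map (algebraMap ℝ ℂ) :=
  rfl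

theorem CqC_mul_blockCol_pow {N p q : ℕ} (hq : q < p) (C : Fin p → Matrix (Fin N) (Fin N) ℝ)
    (hC : ∀ j : Fin p, q < (j : ℕ) → C j = 0) (z : ℂ) (X : Matrix (Fin N) (Fin N) ℂ) :
    CqC C * blockCol (fun k : Fin p => z ^ (k : ℕ) • X) = Qpoly q hq C z * X := by
  simp only [CqC_eq_blockRow, blockRow_mul_blockCol, Qpoly_eq_sum hq C hC, Matrix.sum_mul,
    Matrix.mul_smul, Matrix.smul_mul]

theorem companion_resolvent_blocks_general {N p q : ℕ} (hq : q < p)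
    (A C : Fin p → Matrix (Fin N) (Fin N) ℝ)
    (hC : ∀ j : Fin p, q < (j : ℕ) → C j = 0)
    (z : ℂ)
    (hPz : IsUnit (Ppoly A z).det)
    (hres : IsUnit
      (z • (1 : Matrix (Fin p × Fin N) (Fin p × Fin N) ℂ) -
        (companionM A).map (algebraMap ℝ ℂ)).det) :
    (z • (1 : Matrix (Fin p × Fin N) (Fin p × Fin N) ℂ) -
        (companionM A).map (algebraMap ℝ ℂ))⁻¹ * EpC =
      Matrix.of (fun (x : Fin p × Fin N) (j : Fin N) =>
        (z ^ (x.1 : ℕ) • (Ppoly A z)⁻¹) x.2 j) ∧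
    CqC C *
        (z • (1 : Matrix (Fin p × Fin N) (Fin p × Fin N) ℂ) -
          (companionM A).map (algebraMap ℝ ℂ))⁻¹ * EpC =
      Qpoly q hq C z * (Ppoly A z)⁻¹ := by
  set M : Matrix (Fin p × Fin N) (Fin p × Fin N) ℂ :=
    z • 1 - (companionM A).map (algebraMap ℝ ℂ)
  set V := blockCol fun k : Fin p => z ^ (k : ℕ) • (Ppoly A z)⁻¹
  have hMV : M * V = EpC := by
    rw [sub_companionM_mul_blockCol_pow, mul_nonsing_inv _ hPz, Matrix.mul_one]
  -- A bare `EpC` lets `*` elaborate through `CStarMatrix`'s `HMul`, which `rw` cannot match.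
  have hcol : M⁻¹ * (EpC : Matrix (Fin p × Fin N) (Fin N) ℂ) = V := by
    rw [← hMV, nonsing_inv_mul_cancel_left _ _ hres]
  exact ⟨hcol, (Matrix.mul_assoc _ _ _).trans (by rw [hcol, CqC_mul_blockCol_pow hq C hC])⟩

/-- For every `λ ∈ ℂ` such that `P(λ)` and `λ I_{pN} − 𝒜_p` are invertible, the matrix
`(λ I_{pN} − 𝒜_p)^{−1} E_p` is the block column whose `i`-th `N×N` block is
`λ^{i−1} P(λ)^{−1}`, and consequently `𝒞_q (λ I_{pN} − 𝒜_p)^{−1} E_p = Q(λ) P(λ)^{−1}`. -/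
theorem companion_resolvent_blocks {N p q : ℕ} (hN : 0 < N) (hp : 0 < p) (hq : q < p)
    (A C : Fin p → Matrix (Fin N) (Fin N) ℝ)
    (hC : ∀ j : Fin p, q < (j : ℕ) → C j = 0)
    (z : ℂ)
    (hPz : IsUnit (Ppoly A z).det)
    (hres : IsUnit
      (z • (1 : Matrix (Fin p × Fin N) (Fin p × Fin N) ℂ) -
        (companionM A).map (algebraMap ℝ ℂ)).det) :
    (z • (1 : Matrix (Fin p × Fin N) (Fin p × Fin N) ℂ) -
        (companionM A).map (algebraMap ℝ ℂ))⁻¹ * EpC =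
      Matrix.of (fun (x : Fin p × Fin N) (j : Fin N) =>
        (z ^ (x.1 : ℕ) • (Ppoly A z)⁻¹) x.2 j) ∧
    CqC C *
        (z • (1 : Matrix (Fin p × Fin N) (Fin p × Fin N) ℂ) -
          (companionM A).map (algebraMap ℝ ℂ))⁻¹ * EpC =
      Qpoly q hq C z * (Ppoly A z)⁻¹ :=
  companion_resolvent_blocks_general hq A C hC z hPz hres
end
end

section
/- Let C ⊆ ℝ^N be a closed convex cone and let A ∈ M_N(ℝ) be quasi-positive with respect to C and such that every complex eigenvalue of A has negative real part. Then A is invertible, −A^{−1} = ∫_0^∞ exp(sA) ds, and −A^{−1} maps C into C, i.e. −A^{−1} ∈ π(C). -/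
/-!
Every point of the spectrum of `exp A` is `exp μ` for an eigenvalue `μ` of `A` (take a common
eigenvector of the commuting matrices `A` and `exp A`), so it lies in the open unit disc. Gelfand's
formula then gives `‖exp A ^ n‖ ≤ rⁿ` eventually for some `r < 1`, whence `exp (sA) = O(rˢ)`.
So `G = ∫₀^∞ exp (sA) ds` converges, and integrating `d/ds exp (sA) = A exp (sA)` gives
`A G = -1`. Finally `G x = ∫₀^∞ exp (sA) x ds` is an integral of points of the closed convex cone
`C`, and such an integral stays in `C` because every functional separating a point from `C`
is nonpositive on `C`.
-/

open Matrix MeasureTheory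

noncomputable section

open Filter Topology Asymptotics Set NormedSpace
open scoped NNReal

section RealBanachAlgebra

variable {𝔸 : Type*} [NormedRing 𝔸] [NormedAlgebra ℝ 𝔸] [CompleteSpace 𝔸]

theorem continuous_exp_smul (a : 𝔸) : Continuous fun s : ℝ => exp (s • a) :=
  continuous_iff_continuousAt.2 fun s => (hasDerivAt_exp_smul_const' a s).continuousAt

theorem exists_norm_exp_smul_le_mul_norm_exp_pow_floor (a : 𝔸) :
    ∃ K, 0 ≤ K ∧ ∀ s : ℝ, 0 ≤ s → ‖exp (s • a)‖ ≤ ‖exp a ^ ⌊s⌋₊‖ * K := by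
  -- `exp_add_of_commute` and `exp_nsmul` are stated for `ℚ`-algebras.
  let _ : NormedAlgebra ℚ 𝔸 := NormedAlgebra.restrictScalars ℚ ℝ 𝔸
  obtain ⟨K, hK⟩ := isCompact_Icc.exists_bound_of_continuousOn
    (continuous_exp_smul a).continuousOn (s := Icc 0 1)
  refine ⟨K, (norm_nonneg _).trans (hK 0 ⟨le_rfl, zero_le_one⟩), fun s hs => ?_⟩
  have hsplit : s • a = ⌊s⌋₊ • a + (s - ⌊s⌋₊) • a := by
    rw [← Nat.cast_smul_eq_nsmul ℝ, ← add_smul, add_sub_cancel]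
  rw [hsplit, NormedSpace.exp_add_of_commute (((Commute.refl a).smul_left _).smul_right _),
    NormedSpace.exp_nsmul]
  refine (norm_mul_le _ _).trans (mul_le_mul_of_nonneg_left (hK _ ⟨?_, ?_⟩) (norm_nonneg _))
  · linarith [Nat.floor_le hs]
  · linarith [Nat.lt_floor_add_one s]

theorem isBigO_exp_smul_rpow {a : 𝔸} {r : ℝ} (hr0 : 0 < r) (hr1 : r ≤ 1)
    (h : ∀ᶠ n : ℕ in atTop, ‖exp a ^ n‖ ≤ r ^ n) :
    (fun s : ℝ => exp (s • a)) =O[atTop] fun s => r ^ s := by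
  obtain ⟨K, hK0, hK⟩ := exists_norm_exp_smul_le_mul_norm_exp_pow_floor a
  obtain ⟨n₀, hn₀⟩ := eventually_atTop.mp h
  refine IsBigO.of_bound (K / r) ?_
  filter_upwards [eventually_ge_atTop (n₀ : ℝ)] with s hs
  have hs0 : 0 ≤ s := (Nat.cast_nonneg _).trans hs
  have hfloor : r ^ ⌊s⌋₊ ≤ r ^ s / r := by
    rw [← Real.rpow_natCast, ← Real.rpow_sub_one hr0.ne']
    exact Real.rpow_le_rpow_of_exponent_ge hr0 hr1 (by linarith [Nat.lt_floor_add_one s])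
  calc ‖exp (s • a)‖ ≤ ‖exp a ^ ⌊s⌋₊‖ * K := hK s hs0
    _ ≤ r ^ s / r * K := by
        gcongr
        exact (hn₀ _ (Nat.le_floor hs)).trans hfloor
    _ = K / r * ‖r ^ s‖ := by
        rw [Real.norm_of_nonneg (Real.rpow_nonneg hr0.le _)]; ring

theorem integrableOn_Ici_exp_smul_of_isBigO_rpow {a : 𝔸} {r : ℝ} (hr0 : 0 < r) (hr1 : r < 1)
    (h : (fun s : ℝ => exp (s • a)) =O[atTop] fun s => r ^ s) :
    IntegrableOn (fun s : ℝ => exp (s • a)) (Ici 0) := by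
  refine ((continuous_exp_smul a).continuousOn.locallyIntegrableOn measurableSet_Ici)
    |>.integrableOn_of_isBigO_atTop h ⟨Ioi 0, Ioi_mem_atTop 0, ?_⟩
  have hc : 0 < -Real.log r := neg_pos.mpr (Real.log_neg hr0 hr1)
  refine (exp_neg_integrableOn_Ioi 0 hc).congr_fun (fun s _ => ?_) measurableSet_Ioi
  rw [Real.rpow_def_of_pos hr0]; ring_nf

theorem mul_integral_Ici_exp_smul {a : 𝔸}
    (hint : IntegrableOn (fun s : ℝ => exp (s • a)) (Ici 0))
    (hlim : Tendsto (fun s : ℝ => exp (s • a)) atTop (𝓝 0)) :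
    a * ∫ s in Ici (0 : ℝ), exp (s • a) = -1 := by
  let L := ContinuousLinearMap.mul ℝ 𝔸 a
  have hint' := hint.mono_set Ioi_subset_Ici_self
  have hFTC : ∫ s in Ioi (0 : ℝ), a * exp (s • a) = 0 - exp ((0 : ℝ) • a) :=
    integral_Ioi_of_hasDerivAt_of_tendsto' (fun s _ => hasDerivAt_exp_smul_const' a s)
      (L.integrable_comp hint') hlim
  have hpull : ∫ s in Ioi (0 : ℝ), a * exp (s • a) = a * ∫ s in Ioi (0 : ℝ), exp (s • a) :=
    L.integral_comp_comm hint'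
  rw [integral_Ici_eq_integral_Ioi, ← hpull, hFTC, zero_smul, exp_zero, zero_sub]

end RealBanachAlgebra

theorem spectrum.eventually_norm_pow_le_of_spectralRadius_lt {A : Type*} [NormedRing A]
    [NormedAlgebra ℂ A] [CompleteSpace A] {a : A} {r : ℝ≥0} (h : spectralRadius ℂ a < r) :
    ∀ᶠ n : ℕ in atTop, ‖a ^ n‖ ≤ r ^ n := by
  filter_upwards [(pow_nnnorm_pow_one_div_tendsto_nhds_spectralRadius a).eventually
    (gt_mem_nhds h), eventually_ge_atTop 1] with n hn hn1
  have hn0 : (0 : ℝ) < n := by exact_mod_cast hn1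
  rw [one_div, ← ENNReal.coe_rpow_of_nonneg _ (inv_nonneg.2 hn0.le), ENNReal.coe_lt_coe,
    NNReal.rpow_inv_lt_iff hn0, NNReal.rpow_natCast] at hn
  exact_mod_cast hn.le

theorem ProperCone.integral_mem {α E : Type*} [MeasurableSpace α] {μ : Measure α}
    [NormedAddCommGroup E] [NormedSpace ℝ E] [CompleteSpace E] (C : ProperCone ℝ E)
    {f : α → E} (hf : Integrable f μ) (hfC : ∀ᵐ x ∂μ, f x ∈ C) : ∫ x, f x ∂μ ∈ C := by
  by_contra h
  obtain ⟨φ, hφC, hφ⟩ := C.hyperplane_separation_point h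
  have : 0 ≤ φ (∫ x, f x ∂μ) := by
    rw [← φ.integral_comp_comm hf]
    exact integral_nonneg_of_ae (hfC.mono fun x hx => hφC _ hx)
  linarith

theorem Module.End.exists_eigenvector_of_hasEigenvalue_of_commute {K V : Type*} [Field K]
    [IsAlgClosed K] [AddCommGroup V] [Module K V] [FiniteDimensional K V]
    {f g : Module.End K V} (hfg : Commute f g) {c : K} (hc : f.HasEigenvalue c) :
    ∃ μ : K, ∃ v : V, v ≠ 0 ∧ g v = μ • v ∧ f v = c • v := by
  have hmaps : MapsTo g (f.eigenspace c) (f.eigenspace c) := mapsTo_genEigenspace_of_comm hfg c 1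
  have : Nontrivial (f.eigenspace c) := Submodule.nontrivial_iff_ne_bot.mpr hc
  obtain ⟨μ, hμ⟩ := Module.End.exists_eigenvalue (g.restrict hmaps)
  obtain ⟨w, hw⟩ := hμ.exists_hasEigenvector
  refine ⟨μ, w, by simpa using hw.2, ?_, mem_eigenspace_iff.mp w.2⟩
  exact congrArg Subtype.val hw.apply_eq_smul

-- Matrices carry no norm by default; the ℓ∞ operator norm makes them Banach algebras.
attribute [local instance] Matrix.linftyOpNormedRing Matrix.linftyOpNormedAlgebra

namespace Matrix

variable {n : Type*} [Fintype n] [DecidableEq n]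

theorem exp_mulVec_of_mulVec_eq_smul {𝕂 : Type*} [RCLike 𝕂] {M : Matrix n n 𝕂} {μ : 𝕂}
    {v : n → 𝕂} (hv : M *ᵥ v = μ • v) : exp M *ᵥ v = exp μ • v := by
  have hpow : ∀ k : ℕ, (M ^ k) *ᵥ v = μ ^ k • v := by
    intro k
    induction k with
    | zero => simp
    | succ k ih =>
      rw [pow_succ', pow_succ', ← mulVec_mulVec, ih, mulVec_smul, hv, smul_smul, mul_comm]
  let T := LinearMap.toContinuousLinearMap ((mulVecBilin 𝕂 𝕂).flip v : Matrix n n 𝕂 →ₗ[𝕂] _)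
  have hM := T.hasSum (exp_series_hasSum_exp' (𝕂 := 𝕂) M)
  have hμ := (exp_series_hasSum_exp' (𝕂 := 𝕂) μ).smul_const v
  simp only [T, LinearMap.coe_toContinuousLinearMap', LinearMap.flip_apply, mulVecBilin_apply,
    smul_mulVec, hpow, smul_smul, smul_eq_mul] at hM hμ
  exact hM.unique hμ

theorem mem_spectrum_iff_hasEigenvalue_toLin' {M : Matrix n n ℂ} {c : ℂ} :
    c ∈ spectrum ℂ M ↔ Module.End.HasEigenvalue (toLin' M) c := by
  rw [← AlgEquiv.spectrum_eq (toLinAlgEquiv' (R := ℂ) (n := n)),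
    Module.End.hasEigenvalue_iff_mem_spectrum]
  rfl

theorem spectrum_exp_subset (M : Matrix n n ℂ) :
    spectrum ℂ (exp M) ⊆ exp '' spectrum ℂ M := by
  intro c hc
  have hcomm : Commute (toLin' M) (toLin' (exp M)) :=
    ((Commute.refl M).exp_right).map (toLinAlgEquiv' (R := ℂ) (n := n))
  obtain ⟨μ, v, hv0, hMv, hEv⟩ := Module.End.exists_eigenvector_of_hasEigenvalue_of_commute
    hcomm.symm (mem_spectrum_iff_hasEigenvalue_toLin'.mp hc)
  rw [toLin'_apply] at hMv hEv
  refine ⟨μ, mem_spectrum_iff_hasEigenvalue_toLin'.mpr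
    (Module.End.hasEigenvalue_of_hasEigenvector ⟨Module.End.mem_eigenspace_iff.mpr ?_, hv0⟩), ?_⟩
  · rwa [toLin'_apply]
  · exact smul_left_injective ℂ (M := n → ℂ) hv0
      (by simp only [← exp_mulVec_of_mulVec_eq_smul hMv, hEv])

theorem spectralRadius_exp_lt_one {M : Matrix n n ℂ} (h : ∀ μ ∈ spectrum ℂ M, μ.re < 0) :
    spectralRadius ℂ (exp M) < 1 := by
  rcases (spectrum ℂ (exp M)).eq_empty_or_nonempty with hempty | hne
  · simp [spectralRadius, hempty]
  refine spectrum.spectralRadius_lt_of_forall_lt_of_nonempty hne fun z hz => ?_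
  obtain ⟨μ, hμ, rfl⟩ := spectrum_exp_subset M hz
  rw [← NNReal.coe_lt_coe, coe_nnnorm, ← Complex.exp_eq_exp_ℂ, Complex.norm_exp, NNReal.coe_one,
    Real.exp_lt_one_iff]
  exact h μ hμ

theorem map_exp_algebraMap (B : Matrix n n ℝ) :
    (exp B).map (algebraMap ℝ ℂ) = exp (B.map (algebraMap ℝ ℂ)) :=
  map_exp (algebraMap ℝ ℂ).mapMatrix (continuous_id.matrix_map Complex.continuous_ofReal) B

theorem linfty_opNorm_map_algebraMap (B : Matrix n n ℝ) :
    ‖B.map (algebraMap ℝ ℂ)‖ = ‖B‖ := by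
  simp [linfty_opNorm_def]

theorem isBigO_exp_smul_rpow_of_spectrum_re_neg {A : Matrix n n ℝ}
    (h : ∀ μ ∈ spectrum ℂ (A.map (algebraMap ℝ ℂ)), μ.re < 0) :
    ∃ r : ℝ, 0 < r ∧ r < 1 ∧ (fun s : ℝ => exp (s • A)) =O[atTop] fun s => r ^ s := by
  obtain ⟨r, hρr, hr⟩ := ENNReal.lt_iff_exists_nnreal_btwn.mp (spectralRadius_exp_lt_one h)
  have hr0 : (0 : ℝ) < r := NNReal.coe_pos.mpr (ENNReal.coe_pos.mp (hρr.trans_le' bot_le))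
  have hr1 : (r : ℝ) < 1 := by exact_mod_cast hr
  refine ⟨r, hr0, hr1, ?_⟩
  have hM := isBigO_exp_smul_rpow hr0 hr1.le
    (spectrum.eventually_norm_pow_le_of_spectralRadius_lt hρr)
  refine (isBigO_norm_left.mp (hM.norm_left.congr_left fun s => ?_))
  rw [← linfty_opNorm_map_algebraMap, map_exp_algebraMap]
  congr 2
  ext i j
  simp [Complex.real_smul]

end Matrix

/-- Let `C ⊆ ℝ^N` be a closed convex cone and `A ∈ M_N(ℝ)` quasi-positive with respect to `C`
(i.e. `exp(sA)(C) ⊆ C` for all `s ≥ 0`) with all complex eigenvalues of negative real part.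
Then `A` is invertible, `−A^{−1} = ∫_0^∞ exp(sA) ds` (entrywise), and `−A^{−1} ∈ π(C)`,
i.e. `−A^{−1}` maps `C` into `C`. -/
theorem neg_inv_of_quasiPositive_stable {N : ℕ} (C : Set (Fin N → ℝ))
    (hclosed : IsClosed C)
    (hadd : ∀ x ∈ C, ∀ y ∈ C, x + y ∈ C)
    (hsmul : ∀ t : ℝ, 0 ≤ t → ∀ x ∈ C, t • x ∈ C)
    (A : Matrix (Fin N) (Fin N) ℝ)
    (hquasi : ∀ s : ℝ, 0 ≤ s → ∀ x ∈ C, (NormedSpace.exp (s • A)).mulVec x ∈ C)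
    (hspec : ∀ μ ∈ spectrum ℂ (A.map (algebraMap ℝ ℂ)), μ.re < 0) :
    IsUnit A.det ∧
    (∀ i j : Fin N, IntegrableOn (fun s : ℝ => NormedSpace.exp (s • A) i j) (Set.Ici 0)) ∧
    (∀ i j : Fin N, (-A⁻¹) i j = ∫ s in Set.Ici (0 : ℝ), NormedSpace.exp (s • A) i j) ∧
    (∀ x ∈ C, (-A⁻¹).mulVec x ∈ C) := by
  obtain ⟨r, hr0, hr1, hdecay⟩ := isBigO_exp_smul_rpow_of_spectrum_re_neg hspec
  have hint := integrableOn_Ici_exp_smul_of_isBigO_rpow hr0 hr1 hdecay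
  have hlim := hdecay.trans_tendsto (tendsto_rpow_atTop_of_base_lt_one r (by linarith) hr1)
  set G := ∫ s in Ici (0 : ℝ), exp (s • A)
  have hAG : A * -G = 1 := by
    rw [mul_neg]
    exact neg_eq_iff_eq_neg.mpr (mul_integral_Ici_exp_smul hint hlim)
  have hG : -A⁻¹ = G := by rw [inv_eq_right_inv hAG, neg_neg]
  have hGC : ∀ x ∈ C, G *ᵥ x ∈ C := fun x hx => by
    let K : ProperCone ℝ (Fin N → ℝ) :=
      { carrier := C
        add_mem' := fun hx hy => hadd _ hx _ hy
        zero_mem' := by simpa using hsmul 0 le_rfl x hx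
        smul_mem' := fun c _ hy => hsmul c c.2 _ hy
        isClosed' := hclosed }
    let L := ((mulVecBilin ℝ ℝ).flip x : Matrix (Fin N) (Fin N) ℝ →ₗ[ℝ] _).toContinuousLinearMap
    rw [← show ∫ s in Ici (0 : ℝ), exp (s • A) *ᵥ x = G *ᵥ x from L.integral_comp_comm hint]
    exact K.integral_mem (L.integrable_comp hint)
      ((ae_restrict_iff' measurableSet_Ici).mpr (.of_forall fun s hs => hquasi s hs x hx))
  have hentry (i j : Fin N) : IntegrableOn (fun s : ℝ => exp (s • A) i j) (Ici 0) ∧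
      G i j = ∫ s in Ici (0 : ℝ), exp (s • A) i j :=
    let E := (entryLinearMap ℝ ℝ i j : Matrix (Fin N) (Fin N) ℝ →ₗ[ℝ] ℝ).toContinuousLinearMap
    ⟨E.integrable_comp hint, (E.integral_comp_comm hint).symm⟩
  exact ⟨isUnit_det_of_right_inverse hAG, fun i j => (hentry i j).1,
    fun i j => hG ▸ (hentry i j).2, fun x hx => hG ▸ hGC x hx⟩
end
end

section
/- Let A, B ∈ M_d(ℝ) be entrywise nonnegative matrices. Then for every integer n ≥ 1, (A ⊙ B)^n ⪯ A^n ⊙ B^n, i.e. the matrix A^n ⊙ B^n − (A ⊙ B)^n has all entries nonnegative. -/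
open Matrix

lemma pow_entry_nonneg {d : ℕ} (A : Matrix (Fin d) (Fin d) ℝ)
    (hA : ∀ i j, 0 ≤ A i j) (n : ℕ) (hn : 1 ≤ n) : ∀ i j, 0 ≤ (A ^ n) i j := by
  induction n with
  | zero => omega
  | succ m ih =>
    intro i j
    rcases Nat.lt_or_ge m 1 with h | hm
    · have : m = 0 := by omega
      subst this; simpa using hA i j
    · 
      rw [pow_succ, Matrix.mul_apply]
      exact Finset.sum_nonneg fun k _ => mul_nonneg (ih hm i k) (hA k j)

lemma sum_mul_le {s : Finset (Fin d)} (f g : Fin d → ℝ)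
    (hf : ∀ i, 0 ≤ f i) (hg : ∀ i, 0 ≤ g i) :
    ∑ i ∈ s, f i * g i ≤ (∑ i ∈ s, f i) * (∑ i ∈ s, g i) := by
  rw [Finset.sum_mul_sum]
  calc ∑ i ∈ s, f i * g i ≤ ∑ i ∈ s, ∑ j ∈ s, f i * g j := by
        apply Finset.sum_le_sum
        intro i hi
        exact Finset.single_le_sum (fun j _ => mul_nonneg (hf i) (hg j)) hi
    _ = _ := rfl

/-- Hadamard submultiplicativity of matrix powers: if `A, B ∈ M_d(ℝ)` are entrywise
nonnegative, then `(A ⊙ B)^n ⪯ A^n ⊙ B^n` entrywise for every `n ≥ 1`. -/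
theorem hadamard_pow_le {d : ℕ} (A B : Matrix (Fin d) (Fin d) ℝ)
    (hA : ∀ i j, 0 ≤ A i j) (hB : ∀ i j, 0 ≤ B i j) (n : ℕ) (hn : 1 ≤ n) :
    ∀ i j, ((Matrix.hadamard A B) ^ n) i j ≤ (Matrix.hadamard (A ^ n) (B ^ n)) i j := by
  induction n with
  | zero => omega
  | succ m ih =>
    intro i j
    rcases Nat.lt_or_ge m 1 with h | hm
    · have : m = 0 := by omega
      subst this
      simp [Matrix.hadamard]
    · have key : ∀ i j, 0 ≤ Matrix.hadamard A B i j :=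
        fun i j => mul_nonneg (hA i j) (hB i j)
      rw [pow_succ, pow_succ, pow_succ, Matrix.mul_apply, Matrix.hadamard_apply,
        Matrix.mul_apply, Matrix.mul_apply]
      calc ∑ k, (Matrix.hadamard A B ^ m) i k * Matrix.hadamard A B k j
          ≤ ∑ k, (Matrix.hadamard (A ^ m) (B ^ m)) i k * Matrix.hadamard A B k j := by
            apply Finset.sum_le_sum
            intro k _
            exact mul_le_mul_of_nonneg_right (ih hm i k) (key k j)
        _ = ∑ k, ((A ^ m) i k * A k j) * ((B ^ m) i k * B k j) := by
            apply Finset.sum_congr rfl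
            intro k _
            simp [Matrix.hadamard_apply]; ring
        _ ≤ (∑ k, (A ^ m) i k * A k j) * (∑ k, (B ^ m) i k * B k j) := by
            apply sum_mul_le
            · exact fun k => mul_nonneg (pow_entry_nonneg A hA m hm i k) (hA k j)
            · exact fun k => mul_nonneg (pow_entry_nonneg B hB m hm i k) (hB k j)
end

section
/- Let l, A ∈ M_d(ℝ) be entrywise nonnegative and assume l^n ⪯ l for every integer n ≥ 1. Then exp(l ⊙ A) − I_d ⪯ l ⊙ (exp(A) − I_d). -/
/-!
Compare the exponential series term by term. Each power of a Hadamard product of nonnegative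
matrices is dominated entrywise by the Hadamard product of the powers, `(l ⊙ A)^k ⪯ l^k ⊙ A^k`,
since every path contributing to `(l ⊙ A)^k` also contributes to both `l^k` and `A^k`; for
`k ≥ 1` the hypothesis `l^k ⪯ l` then gives `(l ⊙ A)^k ⪯ l ⊙ A^k`, and the `k = 0` terms of
both series are the identity, which cancels.
-/

open Matrix

namespace Matrix

variable {n R : Type*} [Fintype n]

section OrderedSemiring

variable [CommSemiring R] [PartialOrder R] [IsOrderedRing R]

lemma apply_mul_apply_le_mul_apply {l o : Type*} {M : Matrix l n R} {N : Matrix n o R}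
    (hM : ∀ i j, 0 ≤ M i j) (hN : ∀ i j, 0 ≤ N i j) (i : l) (k : n) (j : o) : M i k * N k j ≤ (M * N) i j := by
  rw [mul_apply]
  exact Finset.single_le_sum (f := fun m => M i m * N m j)
    (fun m _ => mul_nonneg (hM i m) (hN m j)) (Finset.mem_univ k)

variable [DecidableEq n]

lemma hadamard_pow_apply_le {l A : Matrix n n R} (hl : ∀ i j, 0 ≤ l i j)
    (hA : ∀ i j, 0 ≤ A i j) (k : ℕ) (i j : n) :
    ((l ⊙ A) ^ k) i j ≤ (l ^ k) i j * (A ^ k) i j := by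
  induction k generalizing j with
  | zero => by_cases h : i = j <;> simp [h]
  | succ k ih =>
    calc ((l ⊙ A) ^ (k + 1)) i j = ∑ m, ((l ⊙ A) ^ k) i m * (l m j * A m j) := by
          rw [pow_succ, mul_apply]; rfl
      _ ≤ ∑ m, ((l ^ k) i m * (A ^ k) i m) * (l m j * A m j) := by
          gcongr with m
          · exact mul_nonneg (hl m j) (hA m j)
          · exact ih m
      _ = ∑ m, ((l ^ k) i m * l m j) * ((A ^ k) i m * A m j) :=
          Finset.sum_congr rfl fun m _ => by ring
      _ ≤ ∑ m, (l ^ (k + 1)) i j * ((A ^ k) i m * A m j) := by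
          gcongr with m
          · exact mul_nonneg (pow_apply_nonneg hA k i m) (hA m j)
          · rw [pow_succ]; exact apply_mul_apply_le_mul_apply (pow_apply_nonneg hl k) hl i m j
      _ = (l ^ (k + 1)) i j * (A ^ (k + 1)) i j := by
          rw [← Finset.mul_sum, pow_succ A, mul_apply]

end OrderedSemiring

section Exponential

variable {𝕂 : Type*} [RCLike 𝕂] [DecidableEq n]

open scoped Norms.Operator in
lemma hasSum_exp_apply (A : Matrix n n 𝕂) (i j : n) :
    HasSum (fun k => (k.factorial : 𝕂)⁻¹ * (A ^ k) i j) (NormedSpace.exp A i j) :=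
  (Pi.hasSum.mp (Pi.hasSum.mp (NormedSpace.exp_series_hasSum_exp' (𝕂 := 𝕂) A) i) j)

lemma hasSum_exp_sub_one_apply (A : Matrix n n 𝕂) (i j : n) :
    HasSum (fun k => ((k + 1).factorial : 𝕂)⁻¹ * (A ^ (k + 1)) i j)
      ((NormedSpace.exp A - 1) i j) := by
  rw [sub_apply]
  simpa using (hasSum_nat_add_iff' 1).mpr (hasSum_exp_apply A i j)

end Exponential

end Matrix

/-- Let `l, A ∈ M_d(ℝ)` be entrywise nonnegative with `l^n ⪯ l` entrywise for every `n ≥ 1`.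
Then `exp(l ⊙ A) − I_d ⪯ l ⊙ (exp(A) − I_d)` entrywise. -/
theorem exp_hadamard_sub_one_le {d : ℕ} (l A : Matrix (Fin d) (Fin d) ℝ)
    (hl : ∀ i j, 0 ≤ l i j) (hA : ∀ i j, 0 ≤ A i j)
    (hln : ∀ n : ℕ, 1 ≤ n → ∀ i j, (l ^ n) i j ≤ l i j) :
    ∀ i j, (NormedSpace.exp (Matrix.hadamard l A) - 1) i j ≤
      (Matrix.hadamard l (NormedSpace.exp A - 1)) i j := by
  intro i j
  refine hasSum_le (fun k => ?_) (hasSum_exp_sub_one_apply (l ⊙ A) i j)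
    ((hasSum_exp_sub_one_apply A i j).mul_left (l i j))
  have hA_pow := pow_apply_nonneg hA (k + 1) i j
  calc ((k + 1).factorial : ℝ)⁻¹ * ((l ⊙ A) ^ (k + 1)) i j
      ≤ ((k + 1).factorial : ℝ)⁻¹ * ((l ^ (k + 1)) i j * (A ^ (k + 1)) i j) := by
        gcongr; exact hadamard_pow_apply_le hl hA (k + 1) i j
    _ ≤ ((k + 1).factorial : ℝ)⁻¹ * (l i j * (A ^ (k + 1)) i j) := by
        gcongr; exact hln (k + 1) k.succ_pos i j
    _ = l i j * (((k + 1).factorial : ℝ)⁻¹ * (A ^ (k + 1)) i j) := by ring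
end

section
/- Let C ⊆ ℝ^N be a convex cone with C ≠ {0}, let p ≥ 2, let A_1,…,A_p ∈ M_N(ℝ), and let 𝒜_p be the companion block matrix. For J ⊆ {1,…,p} let C^{J,p} := {x = (x_1,…,x_p) ∈ (ℝ^N)^p : x_i ∈ C for all i ∈ J}, a wedge in (ℝ^N)^p. If 𝒜_p is cross-positive with respect to C^{J,p}, i.e. ⟨𝒜_p x, u⟩ ≥ 0 for all x, u ∈ C^{J,p} with ⟨x, u⟩ = 0 (with the standard inner product on (ℝ^N)^p ≅ ℝ^{pN}), then J = {1,…,p}. -/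
/-! If some block index `i` is not in `J`, then the `i`-th block of a vector in the wedge is
free. Pair `i` with a neighbouring index (`i + 1`, or `i - 1` when `i` is last; this is where
`p ≥ 2` enters) and place `c` and `-c`, for some nonzero `c ∈ C`, in the two blocks. The vectors
have disjoint supports, hence are orthogonal, while the identity block of `𝒜_p` linking the two
positions gives `⟨𝒜_p x, u⟩ = -⟨c, c⟩ < 0`. -/

open Matrix

noncomputable section

def CrossPositive {ι : Type*} [Fintype ι] (M : Matrix ι ι ℝ) (K : Set (ι → ℝ)) : Prop :=
  ∀ x ∈ K, ∀ u ∈ K, x ⬝ᵥ u = 0 → 0 ≤ M *ᵥ x ⬝ᵥ u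

/-- The wedge `C^{J,p}`. -/
def blockWedge {N p : ℕ} (C : Set (Fin N → ℝ)) (J : Finset (Fin p)) :
    Set (Fin p × Fin N → ℝ) :=
  {x | ∀ i ∈ J, (fun k => x (i, k)) ∈ C}

section Blocks

variable {ι κ R : Type*} [Fintype ι] [Fintype κ] [DecidableEq ι] [NonUnitalNonAssocSemiring R]

theorem dotProduct_uncurry_single (f : ι × κ → R) (i : ι) (v : κ → R) :
    f ⬝ᵥ Function.uncurry (Pi.single i v) = (fun k => f (i, k)) ⬝ᵥ v := by
  rw [dotProduct, Fintype.sum_prod_type, Finset.sum_eq_single i]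
  · simp [dotProduct]
  · intro j _ hj
    simp [hj]
  · simp

theorem uncurry_single_dotProduct_uncurry_single {i j : ι} (hij : i ≠ j) (v w : κ → R) :
    Function.uncurry (Pi.single i v) ⬝ᵥ Function.uncurry (Pi.single j w) = 0 := by
  rw [dotProduct_uncurry_single]
  change (Pi.single i v : ι → κ → R) j ⬝ᵥ w = 0
  rw [Pi.single_eq_of_ne hij.symm, zero_dotProduct]

end Blocks

section Wedge

variable {N p : ℕ} {C : Set (Fin N → ℝ)} {J : Finset (Fin p)}

theorem uncurry_single_mem_blockWedge_of_mem (h0 : 0 ∈ C) (i : Fin p) {v : Fin N → ℝ}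
    (hv : v ∈ C) : Function.uncurry (Pi.single i v) ∈ blockWedge C J := by
  intro j _
  change (Pi.single i v : Fin p → Fin N → ℝ) j ∈ C
  by_cases hji : j = i
  · rwa [hji, Pi.single_eq_same]
  · rwa [Pi.single_eq_of_ne hji]

theorem uncurry_single_mem_blockWedge_of_notMem (h0 : 0 ∈ C) {i : Fin p} (hi : i ∉ J)
    (v : Fin N → ℝ) : Function.uncurry (Pi.single i v) ∈ blockWedge C J := by
  intro j hj
  change (Pi.single i v : Fin p → Fin N → ℝ) j ∈ C
  rwa [Pi.single_eq_of_ne (ne_of_mem_of_not_mem hj hi)]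

end Wedge

section Companion

variable {N p : ℕ} (A : Fin p → Matrix (Fin N) (Fin N) ℝ)

theorem companionM_mulVec_uncurry_single_succ {a b : Fin p} (hab : (b : ℕ) = a + 1)
    (v : Fin N → ℝ) (k : Fin N) :
    (companionM A *ᵥ Function.uncurry (Pi.single b v)) (a, k) = v k := by
  have ha : (a : ℕ) + 1 ≠ p := by omega
  rw [mulVec, dotProduct_uncurry_single]
  simp [companionM, ha, hab, dotProduct]

theorem companionM_mulVec_uncurry_single_succ_dotProduct {a b : Fin p} (hab : (b : ℕ) = a + 1)
    (v w : Fin N → ℝ) :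
    companionM A *ᵥ Function.uncurry (Pi.single b v) ⬝ᵥ Function.uncurry (Pi.single a w) =
      v ⬝ᵥ w := by
  rw [dotProduct_uncurry_single]
  exact congrArg (· ⬝ᵥ w) (funext (companionM_mulVec_uncurry_single_succ A hab v))

variable {A} in
theorem CrossPositive.mem_of_companionM {C : Set (Fin N → ℝ)} {J : Finset (Fin p)}
    (hA : CrossPositive (companionM A) (blockWedge C J)) (h0 : 0 ∈ C) {c : Fin N → ℝ}
    (hc : c ∈ C) (hc0 : c ≠ 0) {a b : Fin p} (hab : (b : ℕ) = a + 1) : a ∈ J ∧ b ∈ J := by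
  have hba : b ≠ a := fun h => by rw [h] at hab; omega
  have key : ∀ v w, Function.uncurry (Pi.single b v) ∈ blockWedge C J →
      Function.uncurry (Pi.single a w) ∈ blockWedge C J → 0 ≤ v ⬝ᵥ w := fun v w hv hw => by
    simpa only [companionM_mulVec_uncurry_single_succ_dotProduct A hab] using
      hA _ hv _ hw (uncurry_single_dotProduct_uncurry_single hba v w)
  have hcc : 0 < c ⬝ᵥ c := by simpa using dotProduct_self_star_pos_iff.mpr hc0
  constructor
  · by_contra ha
    have := key c (-c) (uncurry_single_mem_blockWedge_of_mem h0 b hc)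
      (uncurry_single_mem_blockWedge_of_notMem h0 ha (-c))
    rw [dotProduct_neg] at this
    linarith
  · by_contra hb
    have := key (-c) c (uncurry_single_mem_blockWedge_of_notMem h0 hb (-c))
      (uncurry_single_mem_blockWedge_of_mem h0 a hc)
    rw [neg_dotProduct] at this
    linarith

end Companion

theorem Fin.exists_adjacent_pair {p : ℕ} (hp : 2 ≤ p) (i : Fin p) :
    ∃ a b : Fin p, (b : ℕ) = a + 1 ∧ (i = a ∨ i = b) := by
  by_cases hi : (i : ℕ) + 1 < p
  · exact ⟨i, ⟨i + 1, hi⟩, rfl, Or.inl rfl⟩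
  · exact ⟨⟨i - 1, by omega⟩, i, by simp only; omega, Or.inr rfl⟩

theorem crossPositive_wedge_forces_full_index_general {N p : ℕ} (hp : 2 ≤ p)
    (C : Set (Fin N → ℝ))
    (h0 : (0 : Fin N → ℝ) ∈ C)
    (hne : C ≠ {0})
    (A : Fin p → Matrix (Fin N) (Fin N) ℝ)
    (J : Finset (Fin p))
    (hcross : ∀ x u : Fin p × Fin N → ℝ,
      (∀ i ∈ J, (fun k => x (i, k)) ∈ C) →
      (∀ i ∈ J, (fun k => u (i, k)) ∈ C) →
      x ⬝ᵥ u = 0 → 0 ≤ (companionM A).mulVec x ⬝ᵥ u) :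
    J = Finset.univ := by
  have hA : CrossPositive (companionM A) (blockWedge C J) :=
    fun x hx u hu => hcross x u hx hu
  obtain ⟨c, hc, hc0⟩ := ((Set.nontrivial_iff_ne_singleton h0).mpr hne).exists_ne 0
  refine Finset.eq_univ_of_forall fun i => ?_
  obtain ⟨a, b, hab, rfl | rfl⟩ := Fin.exists_adjacent_pair hp i
  · exact (hA.mem_of_companionM h0 hc hc0 hab).1
  · exact (hA.mem_of_companionM h0 hc hc0 hab).2

/-- Let `C ⊆ ℝ^N` be a convex cone with `C ≠ {0}`, let `p ≥ 2`, and let `𝒜_p` be the companion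
block matrix of `A_1,…,A_p`. For `J ⊆ {1,…,p}` let `C^{J,p}` be the wedge of all
`x = (x_1,…,x_p) ∈ (ℝ^N)^p` with `x_i ∈ C` for all `i ∈ J`. If `𝒜_p` is cross-positive with
respect to `C^{J,p}` (i.e. `⟨𝒜_p x, u⟩ ≥ 0` whenever `x, u ∈ C^{J,p}` and `⟨x, u⟩ = 0`),
then `J = {1,…,p}`. -/
theorem crossPositive_wedge_forces_full_index {N p : ℕ} (hp : 2 ≤ p)
    (C : Set (Fin N → ℝ))
    (hadd : ∀ x ∈ C, ∀ y ∈ C, x + y ∈ C)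
    (hsmul : ∀ t : ℝ, 0 ≤ t → ∀ x ∈ C, t • x ∈ C)
    (h0 : (0 : Fin N → ℝ) ∈ C)
    (hne : C ≠ {0})
    (A : Fin p → Matrix (Fin N) (Fin N) ℝ)
    (J : Finset (Fin p))
    (hcross : ∀ x u : Fin p × Fin N → ℝ,
      (∀ i ∈ J, (fun k => x (i, k)) ∈ C) →
      (∀ i ∈ J, (fun k => u (i, k)) ∈ C) →
      x ⬝ᵥ u = 0 → 0 ≤ (companionM A).mulVec x ⬝ᵥ u) :
    J = Finset.univ :=
  crossPositive_wedge_forces_full_index_general hp C h0 hne A J hcross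
end
end

section
/- Let C ⊆ ℝ^N be a self-dual cone, i.e. C = {u ∈ ℝ^N : ⟨u, x⟩ ≥ 0 for all x ∈ C}. Let A_1,…,A_p ∈ M_N(ℝ), let 𝒜_p be the companion block matrix, and equip (ℝ^N)^p ≅ ℝ^{pN} with the cone C^p and the standard inner product. Then 𝒜_p is cross-positive with respect to C^p (i.e. ⟨𝒜_p x, u⟩ ≥ 0 for all x, u ∈ C^p with ⟨x, u⟩ = 0) if and only if A_1 is cross-positive with respect to C (i.e. ⟨A_1 x, u⟩ ≥ 0 for all x, u ∈ C with ⟨x, u⟩ = 0) and A_i(C) ⊆ C for every i = 2,…,p. -/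
open Matrix

noncomputable section

section Aux

variable {N p : ℕ}

lemma dot_split (x u : Fin p × Fin N → ℝ) :
    x ⬝ᵥ u = ∑ i : Fin p, (fun k => x (i,k)) ⬝ᵥ (fun k => u (i,k)) := by
  simp [dotProduct, Fintype.sum_prod_type]

lemma comp_mulVec_last (A : Fin p → Matrix (Fin N) (Fin N) ℝ)
    (x : Fin p × Fin N → ℝ) {i : Fin p} (hi : (i:ℕ)+1 = p) (k : Fin N) :
    (companionM A).mulVec x (i,k) = ∑ j : Fin p, (A j.rev).mulVec (fun l => x (j,l)) k := by
  simp [companionM, mulVec, dotProduct, Fintype.sum_prod_type, hi]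

lemma comp_mulVec_not_last (A : Fin p → Matrix (Fin N) (Fin N) ℝ)
    (x : Fin p × Fin N → ℝ) {i : Fin p} (hi : (i:ℕ)+1 < p) (k : Fin N) :
    (companionM A).mulVec x (i,k) = x (⟨(i:ℕ)+1, hi⟩, k) := by
  have hne : ¬ ((i:ℕ)+1 = p) := hi.ne
  have hj : ∀ j : Fin p, ((j:ℕ) = (i:ℕ)+1) ↔ j = ⟨(i:ℕ)+1, hi⟩ := by
    intro j; constructor <;> intro h <;> simp_all [Fin.ext_iff]
  simp only [companionM, mulVec, dotProduct, Fintype.sum_prod_type, Matrix.of_apply, hne,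
    if_false, hj]
  simp [ite_mul, Finset.sum_ite_eq', eq_comm]

lemma comp_dot (hp : 0 < p) (A : Fin p → Matrix (Fin N) (Fin N) ℝ)
    (x u : Fin p × Fin N → ℝ) :
    (companionM A).mulVec x ⬝ᵥ u =
      (∑ j : Fin p, (A j.rev).mulVec (fun l => x (j,l)) ⬝ᵥ
          (fun k => u (⟨p-1, Nat.sub_lt hp one_pos⟩, k)))
      + ∑ i : Fin p, (if h : (i:ℕ)+1 < p then
          (fun k => x (⟨(i:ℕ)+1,h⟩,k)) ⬝ᵥ (fun k => u (i,k)) else 0) := by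
  set last : Fin p := ⟨p-1, Nat.sub_lt hp one_pos⟩ with hlast
  have hlv : (last:ℕ)+1 = p := Nat.succ_pred_eq_of_pos hp
  rw [dot_split]
  have key : ∀ i : Fin p,
      (fun k => (companionM A).mulVec x (i,k)) ⬝ᵥ (fun k => u (i,k)) =
      (if i = last then
        ∑ j : Fin p, (A j.rev).mulVec (fun l => x (j,l)) ⬝ᵥ (fun k => u (last,k)) else 0)
      + (if h : (i:ℕ)+1 < p then
          (fun k => x (⟨(i:ℕ)+1,h⟩,k)) ⬝ᵥ (fun k => u (i,k)) else 0) := by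
    intro i
    rcases lt_or_eq_of_le (Nat.succ_le_of_lt i.isLt) with h | h
    · have hne : i ≠ last := by
        intro he; subst he; omega
      simp only [hne, if_false, dif_pos h, zero_add]
      congr 1
      funext k
      exact comp_mulVec_not_last A x h k
    · have he : i = last := Fin.ext (by omega)
      subst he
      rw [if_pos rfl, dif_neg (by omega : ¬ ((last:ℕ)+1 < p)), add_zero]
      have : (fun k => (companionM A).mulVec x (last,k)) =
          fun k => ∑ j : Fin p, (A j.rev).mulVec (fun l => x (j,l)) k := by
        funext k; exact comp_mulVec_last A x h k
      rw [this]
      simp [dotProduct, Finset.sum_mul]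
      rw [Finset.sum_comm]
  rw [Finset.sum_congr rfl (fun i _ => key i), Finset.sum_add_distrib,
    Finset.sum_ite_eq' Finset.univ last, if_pos (Finset.mem_univ last)]

end Aux

/-- Let `C ⊆ ℝ^N` be a self-dual cone. Then the companion block matrix `𝒜_p` is cross-positive
with respect to `C^p` if and only if `A_1` is cross-positive with respect to `C` and
`A_i(C) ⊆ C` for every `i = 2,…,p`. -/
theorem companion_crossPositive_iff {N p : ℕ} (hp : 0 < p)
    (C : Set (Fin N → ℝ))
    (hselfdual : C = {u : Fin N → ℝ | ∀ x ∈ C, 0 ≤ u ⬝ᵥ x})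
    (A : Fin p → Matrix (Fin N) (Fin N) ℝ) :
    (∀ x u : Fin p × Fin N → ℝ,
        (∀ i : Fin p, (fun k => x (i, k)) ∈ C) →
        (∀ i : Fin p, (fun k => u (i, k)) ∈ C) →
        x ⬝ᵥ u = 0 → 0 ≤ (companionM A).mulVec x ⬝ᵥ u) ↔
      ((∀ x ∈ C, ∀ u ∈ C, x ⬝ᵥ u = 0 → 0 ≤ (A ⟨0, hp⟩).mulVec x ⬝ᵥ u) ∧
        (∀ i : Fin p, 1 ≤ (i : ℕ) → ∀ x ∈ C, (A i).mulVec x ∈ C)) := by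
  have hpair : ∀ a ∈ C, ∀ b ∈ C, 0 ≤ a ⬝ᵥ b := by
    intro a ha b hb
    have h := hselfdual ▸ ha
    exact h b hb
  have hzero : (fun _ : Fin N => (0:ℝ)) ∈ C := by
    rw [hselfdual]; intro y hy; simp [dotProduct]
  set last : Fin p := ⟨p-1, Nat.sub_lt hp one_pos⟩ with hlast
  have hlv : (last:ℕ)+1 = p := Nat.succ_pred_eq_of_pos hp
  have hrevlast : last.rev = ⟨0, hp⟩ := by
    apply Fin.ext
    simp [Fin.val_rev]
    omega
  constructor
  · intro H
    -- combined key: for any j, x u ∈ C with (j = last → x ⬝ᵥ u = 0),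
    -- 0 ≤ (A j.rev).mulVec x ⬝ᵥ u
    have key : ∀ j : Fin p, ∀ x ∈ C, ∀ u ∈ C, (j = last → x ⬝ᵥ u = 0) →
        0 ≤ (A j.rev).mulVec x ⬝ᵥ u := by
      intro j x hx u hu hcond
      set X : Fin p × Fin N → ℝ := fun q => if q.1 = j then x q.2 else 0 with hX
      set U : Fin p × Fin N → ℝ := fun q => if q.1 = last then u q.2 else 0 with hU
      have hXs : ∀ i : Fin p, (fun k => X (i, k)) ∈ C := by
        intro i; by_cases h : i = j <;> simp only [hX, h, if_pos, if_false, if_true]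
        · exact hx
        · exact hzero
      have hUs : ∀ i : Fin p, (fun k => U (i, k)) ∈ C := by
        intro i; by_cases h : i = last <;> simp only [hU, h, if_pos, if_false, if_true]
        · exact hu
        · exact hzero
      have hXU : X ⬝ᵥ U = 0 := by
        rw [dot_split]
        apply Finset.sum_eq_zero
        intro i _
        by_cases h : i = j
        · subst h
          by_cases h2 : i = last
          · simp only [hX, hU, if_pos rfl, h2, dotProduct]
            simpa [dotProduct] using hcond h2
          · simp [hX, hU, h2, dotProduct]
        · simp [hX, h, dotProduct]
      have h0 := H X U hXs hUs hXU
      rw [comp_dot hp, ← hlast] at h0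
      -- second sum vanishes
      have h2 : (∑ i : Fin p, (if h : (i:ℕ)+1 < p then
          (fun k => X (⟨(i:ℕ)+1, h⟩, k)) ⬝ᵥ (fun k => U (i,k)) else 0)) = 0 := by
        apply Finset.sum_eq_zero
        intro i _
        split
        · next hi =>
          have : i ≠ last := by
            intro he; subst he; omega
          simp [hU, this, dotProduct]
        · rfl
      rw [h2, add_zero] at h0
      -- first sum collapses to j
      have h1 : (∑ j' : Fin p, (A j'.rev).mulVec (fun l => X (j',l)) ⬝ᵥ
          (fun k => U (last, k))) = (A j.rev).mulVec x ⬝ᵥ u := by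
        rw [Finset.sum_eq_single j]
        · simp [hX, hU]
        · intro b _ hb
          have : (fun l => X (b,l)) = fun _ => (0:ℝ) := by
            funext l; simp [hX, hb]
          rw [this]
          simp [mulVec, dotProduct]
        · intro h; exact absurd (Finset.mem_univ j) h
      rw [h1] at h0
      exact h0
    constructor
    · intro x hx u hu hxu
      have := key last x hx u hu (fun _ => hxu)
      rwa [hrevlast] at this
    · intro i hi x hx
      rw [hselfdual]
      intro u hu
      have hne : i.rev ≠ last := by
        intro he
        have := congrArg Fin.val he
        simp [Fin.val_rev] at this
        omega
      have := key i.rev x hx u hu (fun h => absurd h hne)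
      rwa [Fin.rev_rev] at this
  · rintro ⟨H1, H2⟩ x u hx hu hxu
    have each : ∀ i : Fin p, (fun k => x (i,k)) ⬝ᵥ (fun k => u (i,k)) = 0 := by
      rw [dot_split] at hxu
      have := (Finset.sum_eq_zero_iff_of_nonneg
        (fun i _ => hpair _ (hx i) _ (hu i))).mp hxu
      intro i; exact this i (Finset.mem_univ i)
    rw [comp_dot hp, ← hlast]
    apply add_nonneg
    · apply Finset.sum_nonneg
      intro j _
      by_cases hj : j = last
      · subst hj
        rw [hrevlast]
        exact H1 _ (hx last) _ (hu last) (each last)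
      · refine hpair _ (H2 j.rev ?_ _ (hx j)) _ (hu last)
        have : (j:ℕ) ≠ p - 1 := fun h => hj (Fin.ext h)
        have := j.isLt
        simp [Fin.val_rev]
        omega
    · apply Finset.sum_nonneg
      intro i _
      split
      · exact hpair _ (hx _) _ (hu i)
      · exact le_refl 0
end
end
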